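/- arXiv:2010.13898 — 4 statements merged into one kernel-verified Lean document; each statement's English description precedes it below -/
import Mathlib

section
/- Let Q be a probability distribution on ℝ with finite second moment and fix τ ∈ (0,1). Then there is at most one t* ∈ ℝ satisfying τ ∫_{y ≥ t*} (y - t*) dQ(y) = (1-τ) ∫_{y < t*} (t* - y) dQ(y) (i.e., the τ-expectile is unique when it exists). -/
/-!
The expectile condition says that `t` is a zero of `t ↦ ∫ y, τ (y - t)⁺ - (1 - τ) (t - y)⁺ ∂Q`.
For `0 < τ < 1` the integrand is strictly decreasing in `t` for every `y`, and `Q` is a nonzero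
measure, so this integral is strictly decreasing and has at most one zero.
-/

open MeasureTheory

theorem integral_lt_integral_of_forall_lt {α : Type*} [MeasurableSpace α] {μ : Measure α}
    [NeZero μ] {f g : α → ℝ} (hf : Integrable f μ) (hg : Integrable g μ)
    (hfg : ∀ x, f x < g x) : ∫ x, f x ∂μ < ∫ x, g x ∂μ := by
  have hsupp : (Function.support fun x => g x - f x) = Set.univ :=
    Set.eq_univ_of_forall fun x => (sub_pos.2 (hfg x)).ne'
  rw [← sub_pos, ← integral_sub hg hf,
    integral_pos_iff_support_of_nonneg (fun x => (sub_pos.2 (hfg x)).le) (hg.sub hf), hsupp]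
  exact pos_iff_ne_zero.2 (Measure.measure_univ_ne_zero.2 (NeZero.ne μ))

theorem setIntegral_Ici_sub_eq_integral_max {μ : Measure ℝ} (t : ℝ) :
    ∫ y in Set.Ici t, (y - t) ∂μ = ∫ y, max (y - t) 0 ∂μ := by
  rw [← integral_indicator measurableSet_Ici]
  congr 1 with y
  by_cases hy : t ≤ y
  · simp [hy]
  · simp [hy, (not_le.1 hy).le]

theorem setIntegral_Iio_sub_eq_integral_max {μ : Measure ℝ} (t : ℝ) :
    ∫ y in Set.Iio t, (t - y) ∂μ = ∫ y, max (t - y) 0 ∂μ := by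
  rw [← integral_indicator measurableSet_Iio]
  congr 1 with y
  by_cases hy : y < t
  · simp [hy, hy.le]
  · simp [hy, not_lt.1 hy]

def expectileScore (τ t y : ℝ) : ℝ :=
  τ * max (y - t) 0 - (1 - τ) * max (t - y) 0

theorem expectileScore_strictAnti {τ : ℝ} (hτ : τ ∈ Set.Ioo (0 : ℝ) 1) (y : ℝ) :
    StrictAnti fun t => expectileScore τ t y := by
  intro s t hst
  obtain ⟨hτ₀, hτ₁⟩ := hτ
  simp only [expectileScore]
  rcases le_total y s with hys | hsy
  · rw [max_eq_right (by linarith : y - t ≤ 0), max_eq_right (by linarith : y - s ≤ 0),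
      max_eq_left (by linarith : 0 ≤ t - y), max_eq_left (by linarith : 0 ≤ s - y)]
    nlinarith
  rcases le_total y t with hyt | hty
  · rw [max_eq_right (by linarith : y - t ≤ 0), max_eq_left (by linarith : 0 ≤ y - s),
      max_eq_left (by linarith : 0 ≤ t - y), max_eq_right (by linarith : s - y ≤ 0)]
    rcases hsy.lt_or_eq with hsy | rfl
    · nlinarith [mul_nonneg (sub_nonneg.2 hτ₁.le) (sub_nonneg.2 hyt)]
    · nlinarith
  · rw [max_eq_left (by linarith : 0 ≤ y - t), max_eq_left (by linarith : 0 ≤ y - s),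
      max_eq_right (by linarith : t - y ≤ 0), max_eq_right (by linarith : s - y ≤ 0)]
    nlinarith

section

variable {μ : Measure ℝ} [IsFiniteMeasure μ]

theorem integrable_expectileScore (hμ : Integrable (fun y : ℝ => y) μ) (τ t : ℝ) :
    Integrable (fun y => expectileScore τ t y) μ :=
  ((hμ.sub (integrable_const t)).pos_part.const_mul τ).sub
    (((integrable_const t).sub hμ).pos_part.const_mul (1 - τ))

theorem integral_expectileScore (hμ : Integrable (fun y : ℝ => y) μ) (τ t : ℝ) :
    ∫ y, expectileScore τ t y ∂μ
      = τ * ∫ y in Set.Ici t, (y - t) ∂μ - (1 - τ) * ∫ y in Set.Iio t, (t - y) ∂μ := by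
  rw [setIntegral_Ici_sub_eq_integral_max, setIntegral_Iio_sub_eq_integral_max,
    ← integral_const_mul, ← integral_const_mul, ← integral_sub]
  · rfl
  · exact (hμ.sub (integrable_const t)).pos_part.const_mul τ
  · exact ((integrable_const t).sub hμ).pos_part.const_mul (1 - τ)

theorem integral_expectileScore_strictAnti [NeZero μ] (hμ : Integrable (fun y : ℝ => y) μ)
    {τ : ℝ} (hτ : τ ∈ Set.Ioo (0 : ℝ) 1) : StrictAnti fun t => ∫ y, expectileScore τ t y ∂μ :=
  fun _ _ hst => integral_lt_integral_of_forall_lt (integrable_expectileScore hμ _ _)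
    (integrable_expectileScore hμ _ _) fun y => expectileScore_strictAnti hτ y hst

end

theorem integrable_id_of_integrable_sq {μ : Measure ℝ} [IsFiniteMeasure μ]
    (h : Integrable (fun y : ℝ => y ^ 2) μ) : Integrable (fun y : ℝ => y) μ :=
  ((memLp_two_iff_integrable_sq aestronglyMeasurable_id).2 h).integrable one_le_two

theorem expectile_unique (Q : Measure ℝ) [IsProbabilityMeasure Q]
    (hQ2 : Integrable (fun y : ℝ => y ^ 2) Q)
    (τ : ℝ) (hτ : τ ∈ Set.Ioo (0 : ℝ) 1) (t₁ t₂ : ℝ)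
    (h₁ : τ * ∫ y in Set.Ici t₁, (y - t₁) ∂Q
      = (1 - τ) * ∫ y in Set.Iio t₁, (t₁ - y) ∂Q)
    (h₂ : τ * ∫ y in Set.Ici t₂, (y - t₂) ∂Q
      = (1 - τ) * ∫ y in Set.Iio t₂, (t₂ - y) ∂Q) :
    t₁ = t₂ := by
  have hy := integrable_id_of_integrable_sq hQ2
  refine (integral_expectileScore_strictAnti hy hτ).injective ?_
  rw [integral_expectileScore hy, integral_expectileScore hy, h₁, h₂, sub_self, sub_self]
end

section
/- Let Q be a probability distribution on ℝ with finite second moment, τ ∈ (0,1), and let t* be the τ-expectile of Q. For all t ≥ t*, the excess inner risk satisfies C_{L_τ,Q}(t) - C_{L_τ,Q}(t*) = (t*-t)²[(1-τ)Q((-∞,t*)) + τQ([t,∞))] + τ ∫_{t* ≤ y < t} (y-t*)(2t-t*-y) dQ(y) + (1-τ) ∫_{t* ≤ y < t} (y-t)² dQ(y). -/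
/-
Pointwise in `y`, the excess loss `L_τ(y, t) - L_τ(y, t*)` is the integrand of the claimed
right-hand side plus `2 (t* - t) ψ(y, t*)`, where `ψ(y, t) = (1 - τ)(y - t)` for `y < t` and
`τ (y - t)` otherwise is `-½ ∂ₜ L_τ(y, t)`. The integral of `ψ(·, t*)` is the first-order condition
defining the expectile, so that term integrates to zero.
-/

open MeasureTheory

noncomputable def alsLoss (τ y t : ℝ) : ℝ :=
  if y < t then (1 - τ) * (y - t) ^ 2 else τ * (y - t) ^ 2

noncomputable def expectileIdentification (τ y t : ℝ) : ℝ :=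
  if y < t then (1 - τ) * (y - t) else τ * (y - t)

lemma alsLoss_sub_alsLoss {τ s t : ℝ} (hst : s ≤ t) (y : ℝ) :
    alsLoss τ y t - alsLoss τ y s =
      (1 - τ) * (Set.Iio s).indicator (fun _ => (s - t) ^ 2) y
      + τ * (Set.Ici t).indicator (fun _ => (s - t) ^ 2) y
      + τ * (Set.Ico s t).indicator (fun y => (y - s) * (2 * t - s - y)) y
      + (1 - τ) * (Set.Ico s t).indicator (fun y => (y - t) ^ 2) y
      + 2 * (s - t) * expectileIdentification τ y s := by
  simp only [alsLoss, expectileIdentification, Set.indicator, Set.mem_Iio, Set.mem_Ici,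
    Set.mem_Ico]
  split_ifs <;> grind

section
variable {E : Type*} [NormedAddCommGroup E] {μ : Measure ℝ} {f g : ℝ → E}

lemma integrable_ite_lt (hf : Integrable f μ) (hg : Integrable g μ) (t : ℝ) :
    Integrable (fun y => if y < t then f y else g y) μ :=
  Integrable.piecewise (s := Set.Iio t) measurableSet_Iio hf.integrableOn hg.integrableOn

lemma integral_ite_lt [NormedSpace ℝ E] (hf : Integrable f μ) (hg : Integrable g μ) (t : ℝ) :
    ∫ y, (if y < t then f y else g y) ∂μ
      = (∫ y in Set.Iio t, f y ∂μ) + ∫ y in Set.Ici t, g y ∂μ := by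
  rw [← Set.compl_Iio]
  exact integral_piecewise (s := Set.Iio t) measurableSet_Iio hf.integrableOn hg.integrableOn

end

section
variable {μ : Measure ℝ} [IsFiniteMeasure μ]

lemma integrable_alsLoss (hμ : MemLp id 2 μ) (τ t : ℝ) :
    Integrable (fun y => alsLoss τ y t) μ := by
  have h : Integrable (fun y => (y - t) ^ 2) μ := (hμ.sub (memLp_const t)).integrable_sq
  exact integrable_ite_lt (h.const_mul _) (h.const_mul _) t

lemma integral_expectileIdentification (hμ : MemLp id 2 μ) (τ s : ℝ) :
    ∫ y, expectileIdentification τ y s ∂μ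
      = τ * (∫ y in Set.Ici s, (y - s) ∂μ) - (1 - τ) * ∫ y in Set.Iio s, (s - y) ∂μ := by
  have h : Integrable (fun y => y - s) μ := (hμ.sub (memLp_const s)).integrable one_le_two
  have hneg : ∫ y in Set.Iio s, (y - s) ∂μ = -∫ y in Set.Iio s, (s - y) ∂μ := by
    rw [← integral_neg]
    simp_rw [neg_sub]
  unfold expectileIdentification
  rw [integral_ite_lt (h.const_mul _) (h.const_mul _), integral_const_mul, integral_const_mul, hneg]
  ring

lemma integral_alsLoss_sub_integral_alsLoss (hμ : MemLp id 2 μ) (τ : ℝ) {s t : ℝ}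
    (hst : s ≤ t) :
    (∫ y, alsLoss τ y t ∂μ) - ∫ y, alsLoss τ y s ∂μ =
      (s - t) ^ 2 * ((1 - τ) * μ.real (Set.Iio s) + τ * μ.real (Set.Ici t))
      + τ * (∫ y in Set.Ico s t, (y - s) * (2 * t - s - y) ∂μ)
      + (1 - τ) * (∫ y in Set.Ico s t, (y - t) ^ 2 ∂μ)
      + 2 * (s - t) * ∫ y, expectileIdentification τ y s ∂μ := by
  have hlin : ∀ a, MemLp (fun y => y - a) 2 μ := fun a => hμ.sub (memLp_const a)
  have hconst : Integrable (fun _ => (s - t) ^ 2) μ := integrable_const _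
  have hq : Integrable (fun y => (y - s) * (2 * t - s - y)) μ :=
    (hlin s).integrable_mul ((memLp_const (2 * t - s)).sub hμ)
  have hA := (hconst.indicator (measurableSet_Iio (a := s))).const_mul (1 - τ)
  have hB := (hconst.indicator (measurableSet_Ici (a := t))).const_mul τ
  have hC := (hq.indicator (measurableSet_Ico (a := s) (b := t))).const_mul τ
  have hD := ((hlin t).integrable_sq.indicator (measurableSet_Ico (a := s) (b := t))).const_mul
    (1 - τ)
  have hψ : Integrable (fun y => expectileIdentification τ y s) μ := by
    have h := (hlin s).integrable one_le_two
    exact integrable_ite_lt (h.const_mul _) (h.const_mul _) s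
  rw [← integral_sub (integrable_alsLoss hμ τ t) (integrable_alsLoss hμ τ s)]
  simp_rw [alsLoss_sub_alsLoss hst]
  rw [integral_add (((hA.fun_add hB).fun_add hC).fun_add hD) (hψ.const_mul _),
    integral_add ((hA.fun_add hB).fun_add hC) hD, integral_add (hA.fun_add hB) hC,
    integral_add hA hB]
  simp only [integral_const_mul, integral_indicator measurableSet_Iio,
    integral_indicator measurableSet_Ici, integral_indicator measurableSet_Ico, setIntegral_const,
    smul_eq_mul]
  ring

end

theorem excess_inner_risk_eq_general (Q : Measure ℝ) [IsProbabilityMeasure Q]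
    (hQ2 : Integrable (fun y : ℝ => y ^ 2) Q)
    (τ : ℝ) (tstar : ℝ)
    (hfoc : τ * ∫ y in Set.Ici tstar, (y - tstar) ∂Q
      = (1 - τ) * ∫ y in Set.Iio tstar, (tstar - y) ∂Q) :
    ∀ t : ℝ, tstar ≤ t →
      (∫ y, alsLoss τ y t ∂Q) - (∫ y, alsLoss τ y tstar ∂Q)
        = (tstar - t) ^ 2 * ((1 - τ) * (Q (Set.Iio tstar)).toReal
            + τ * (Q (Set.Ici t)).toReal)
          + τ * (∫ y in Set.Ico tstar t, (y - tstar) * (2 * t - tstar - y) ∂Q)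
          + (1 - τ) * (∫ y in Set.Ico tstar t, (y - t) ^ 2 ∂Q) := by
  intro t ht
  have hQ : MemLp id 2 Q := (memLp_two_iff_integrable_sq aestronglyMeasurable_id).2 hQ2
  rw [integral_alsLoss_sub_integral_alsLoss hQ τ ht, integral_expectileIdentification hQ, hfoc,
    sub_self, mul_zero, add_zero, Measure.real_def, Measure.real_def]

theorem excess_inner_risk_eq (Q : Measure ℝ) [IsProbabilityMeasure Q]
    (hQ2 : Integrable (fun y : ℝ => y ^ 2) Q)
    (τ : ℝ) (hτ : τ ∈ Set.Ioo (0 : ℝ) 1) (tstar : ℝ)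
    (hfoc : τ * ∫ y in Set.Ici tstar, (y - tstar) ∂Q
      = (1 - τ) * ∫ y in Set.Iio tstar, (tstar - y) ∂Q) :
    ∀ t : ℝ, tstar ≤ t →
      (∫ y, alsLoss τ y t ∂Q) - (∫ y, alsLoss τ y tstar ∂Q)
        = (tstar - t) ^ 2 * ((1 - τ) * (Q (Set.Iio tstar)).toReal
            + τ * (Q (Set.Ici t)).toReal)
          + τ * (∫ y in Set.Ico tstar t, (y - tstar) * (2 * t - tstar - y) ∂Q)
          + (1 - τ) * (∫ y in Set.Ico tstar t, (y - t) ^ 2 ∂Q) :=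
  excess_inner_risk_eq_general Q hQ2 τ tstar hfoc
end

section
/- Let Q be a probability distribution on ℝ with finite second moment, let τ ∈ (0,1), and let t* be the τ-expectile of Q. Then C_{L_τ,Q}(t*) = inf_{t ∈ ℝ} C_{L_τ,Q}(t), i.e., the τ-expectile attains the minimal inner L_τ-risk. -/
open MeasureTheory

lemma alsLoss_subgrad (τ y t tstar : ℝ) (h0 : 0 ≤ τ) (h1 : τ ≤ 1) :
    alsLoss τ y tstar
      + (if y < tstar then -2*(1-τ)*(y-tstar) else -2*τ*(y-tstar)) * (t - tstar)
      ≤ alsLoss τ y t := by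
  have h1' : (0:ℝ) ≤ 1 - τ := by linarith
  unfold alsLoss
  split_ifs with hs ht
  · nlinarith [mul_nonneg h1' (sq_nonneg (t - tstar))]
  · nlinarith [mul_nonneg h0 (sq_nonneg (y - t)),
      mul_nonneg h1' (sq_nonneg (y - tstar)),
      mul_nonneg h1' (mul_nonneg (by linarith : (0:ℝ) ≤ tstar - y) (by linarith : (0:ℝ) ≤ y - t))]
  · nlinarith [mul_nonneg h1' (sq_nonneg (y - t)),
      mul_nonneg h0 (sq_nonneg (y - tstar)),
      mul_nonneg h0 (mul_nonneg (by linarith : (0:ℝ) ≤ y - tstar) (by linarith : (0:ℝ) ≤ t - y))]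
  · nlinarith [mul_nonneg h0 (sq_nonneg (t - tstar))]

theorem expectile_attains_min_risk (Q : Measure ℝ) [IsProbabilityMeasure Q]
    (hQ2 : Integrable (fun y : ℝ => y ^ 2) Q)
    (τ : ℝ) (hτ : τ ∈ Set.Ioo (0 : ℝ) 1) (tstar : ℝ)
    (hfoc : τ * ∫ y in Set.Ici tstar, (y - tstar) ∂Q
      = (1 - τ) * ∫ y in Set.Iio tstar, (tstar - y) ∂Q) :
    (∫ y, alsLoss τ y tstar ∂Q) = ⨅ t : ℝ, ∫ y, alsLoss τ y t ∂Q := by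
  obtain ⟨hτ0, hτ1⟩ := hτ
  -- integrability of id
  have hid : Integrable (fun y : ℝ => y) Q := by
    refine (hQ2.add (integrable_const 1)).mono'
      measurable_id.aestronglyMeasurable (ae_of_all _ fun y => ?_)
    have h1 : |y| ≤ y^2 + 1 := by nlinarith [sq_nonneg (|y| - 1), sq_abs y]
    have h2 : (0:ℝ) ≤ y^2 + 1 := by positivity
    simpa [Real.norm_eq_abs, abs_of_nonneg h2] using h1
  have hsqt : ∀ t : ℝ, Integrable (fun y : ℝ => (y - t)^2) Q := by
    intro t
    have : Integrable (fun y : ℝ => y^2 - (2*t)*y + t^2) Q :=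
      (hQ2.sub (hid.const_mul (2*t))).add (integrable_const _)
    convert this using 1; ext y; ring
  have hInt : ∀ t : ℝ, Integrable (fun y => alsLoss τ y t) Q := by
    intro t
    refine (hsqt t).mono' ?_ (ae_of_all _ fun y => ?_)
    · exact (Measurable.ite (measurableSet_lt measurable_id measurable_const)
        (by fun_prop) (by fun_prop)).aestronglyMeasurable
    · unfold alsLoss
      have h2 : (0:ℝ) ≤ (y - t)^2 := sq_nonneg _
      split_ifs <;> rw [Real.norm_eq_abs, abs_of_nonneg (by nlinarith)] <;> nlinarith
  -- the subgradient function
  set φ : ℝ → ℝ := fun y =>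
    if y < tstar then -2*(1-τ)*(y-tstar) else -2*τ*(y-tstar) with hφdef
  have hsub : Integrable (fun y : ℝ => y - tstar) Q := hid.sub (integrable_const _)
  have hφint : Integrable φ Q := by
    refine ((hsub.abs).const_mul 2).mono' ?_ (ae_of_all _ fun y => ?_)
    · exact (Measurable.ite (measurableSet_lt measurable_id measurable_const)
        (by fun_prop) (by fun_prop)).aestronglyMeasurable
    · simp only [hφdef, Real.norm_eq_abs]
      split_ifs with h
      · rw [abs_mul, abs_mul]
        have : |(-2:ℝ)| * |1 - τ| ≤ 2 := by
          rw [abs_of_nonneg (by linarith : (0:ℝ) ≤ 1 - τ)]; norm_num; linarith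
        nlinarith [abs_nonneg (y - tstar), abs_nonneg ((-2:ℝ)), abs_nonneg (1 - τ)]
      · rw [abs_mul, abs_mul]
        have : |(-2:ℝ)| * |τ| ≤ 2 := by
          rw [abs_of_nonneg (le_of_lt hτ0)]; norm_num; linarith
        nlinarith [abs_nonneg (y - tstar)]
  -- ∫ φ = 0
  have hφ0 : ∫ y, φ y ∂Q = 0 := by
    have hsplit := intervalIntegral.integral_Iio_add_Ici (μ := Q) (b := tstar)
      hφint.integrableOn hφint.integrableOn
    have hIio : ∫ y in Set.Iio tstar, φ y ∂Q
        = -2*(1-τ) * ∫ y in Set.Iio tstar, (y - tstar) ∂Q := by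
      rw [← integral_const_mul]
      refine setIntegral_congr_fun measurableSet_Iio fun y hy => ?_
      simp only [hφdef]; rw [if_pos (Set.mem_Iio.mp hy)]
    have hIci : ∫ y in Set.Ici tstar, φ y ∂Q
        = -2*τ * ∫ y in Set.Ici tstar, (y - tstar) ∂Q := by
      rw [← integral_const_mul]
      refine setIntegral_congr_fun measurableSet_Ici fun y hy => ?_
      simp only [hφdef]; rw [if_neg (not_lt.2 (Set.mem_Ici.mp hy))]
    have hneg : ∫ y in Set.Iio tstar, (y - tstar) ∂Q
        = - ∫ y in Set.Iio tstar, (tstar - y) ∂Q := by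
      rw [← integral_neg]; congr 1; ext y; ring
    rw [← hsplit, hIio, hIci, hneg]
    linarith [hfoc]
  -- main inequality
  have hmin : ∀ t : ℝ, (∫ y, alsLoss τ y tstar ∂Q) ≤ ∫ y, alsLoss τ y t ∂Q := by
    intro t
    have hle : ∫ y, (alsLoss τ y tstar + φ y * (t - tstar)) ∂Q ≤ ∫ y, alsLoss τ y t ∂Q := by
      refine integral_mono ((hInt tstar).add (hφint.mul_const _)) (hInt t) fun y => ?_
      exact alsLoss_subgrad τ y t tstar (le_of_lt hτ0) (le_of_lt hτ1)
    calc (∫ y, alsLoss τ y tstar ∂Q)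
        = ∫ y, (alsLoss τ y tstar + φ y * (t - tstar)) ∂Q := by
          rw [integral_add (hInt tstar) (hφint.mul_const _), integral_mul_const, hφ0]
          ring
      _ ≤ _ := hle
  refine le_antisymm (le_ciInf hmin) (ciInf_le ⟨∫ y, alsLoss τ y tstar ∂Q, ?_⟩ tstar)
  rintro x ⟨t, rfl⟩
  exact hmin t
end

section
/- Let Q be a probability distribution on ℝ with finite second moment and τ ∈ (0,1). The inner risk C_{L_τ,Q}(t) = ∫ L_τ(y,t) dQ(y) is differentiable in t with derivative C'_{L_τ,Q}(t) = -2τ ∫_{y ≥ t}(y-t) dQ(y) + 2(1-τ) ∫_{y < t}(t-y) dQ(y). -/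
open MeasureTheory

/-!
Differentiate under the integral sign. For fixed `y`, `t ↦ L_τ(y, t)` is differentiable
everywhere, also at the kink `t = y`, where both quadratic branches vanish together with their
slopes. Its derivative is bounded by `2 (|τ| + |1 - τ|) |y - t|`, which near a given `t` is
dominated by a function that is integrable because `Q` has a finite second, hence first, moment.
-/

open Set

theorem HasDerivAt.ite_lt {f g f' g' : ℝ → ℝ} {a : ℝ} (hf : ∀ x, HasDerivAt f (f' x) x)
    (hg : ∀ x, HasDerivAt g (g' x) x) (h_eq : f a = g a) (h_eq' : f' a = g' a) (x : ℝ) :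
    HasDerivAt (fun s => if a < s then f s else g s) (if a < x then f' x else g' x) x := by
  rcases lt_trichotomy a x with hax | hax | hxa
  · rw [if_pos hax]
    refine (hf x).congr_of_eventuallyEq ?_
    filter_upwards [eventually_gt_nhds hax] with s hs using if_pos hs
  · subst hax
    rw [if_neg (lt_irrefl a), ← hasDerivWithinAt_univ, ← Iic_union_Ici]
    refine HasDerivWithinAt.union ?_ ?_
    · exact (hg a).hasDerivWithinAt.congr (fun s hs => if_neg (not_lt.2 hs)) (if_neg (lt_irrefl a))
    · refine (h_eq' ▸ (hf a).hasDerivWithinAt).congr (fun s hs => ?_)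
        ((if_neg (lt_irrefl a)).trans h_eq.symm)
      rcases (mem_Ici.1 hs).lt_or_eq with has | rfl
      · exact if_pos has
      · exact (if_neg (lt_irrefl _)).trans h_eq.symm
  · rw [if_neg hxa.not_gt]
    refine (hg x).congr_of_eventuallyEq ?_
    filter_upwards [eventually_lt_nhds hxa] with s hs using if_neg hs.not_gt

noncomputable def alsLossDeriv (τ y t : ℝ) : ℝ :=
  if y < t then 2 * (1 - τ) * (t - y) else -2 * τ * (y - t)

theorem alsLoss_hasDerivAt (τ y t : ℝ) : HasDerivAt (alsLoss τ y) (alsLossDeriv τ y t) t := by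
  have hsq (c s : ℝ) : HasDerivAt (fun s => c * (y - s) ^ 2) (-2 * c * (y - s)) s :=
    ((((hasDerivAt_id' s).const_sub y).fun_pow 2).const_mul c).congr_deriv (by push_cast; ring)
  convert HasDerivAt.ite_lt (a := y) (hsq (1 - τ)) (hsq τ) (by ring) (by ring) t using 1
  · rfl
  · unfold alsLossDeriv; split_ifs <;> ring

theorem abs_alsLoss_le (τ y t : ℝ) : |alsLoss τ y t| ≤ (|τ| + |1 - τ|) * (y - t) ^ 2 := by
  unfold alsLoss
  split_ifs <;> rw [abs_mul, abs_sq] <;> gcongr <;> linarith [abs_nonneg τ, abs_nonneg (1 - τ)]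

theorem abs_alsLossDeriv_le (τ y t : ℝ) :
    |alsLossDeriv τ y t| ≤ 2 * (|τ| + |1 - τ|) * |y - t| := by
  unfold alsLossDeriv
  split_ifs
  · rw [abs_mul, abs_mul, abs_two, abs_sub_comm t]
    gcongr
    linarith [abs_nonneg τ]
  · rw [abs_mul, abs_mul, abs_neg, abs_two]
    gcongr
    linarith [abs_nonneg (1 - τ)]

theorem measurable_alsLoss (τ t : ℝ) : Measurable fun y => alsLoss τ y t :=
  Measurable.ite measurableSet_Iio (by fun_prop) (by fun_prop)

theorem measurable_alsLossDeriv (τ t : ℝ) : Measurable fun y => alsLossDeriv τ y t :=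
  Measurable.ite measurableSet_Iio (by fun_prop) (by fun_prop)

theorem memLp_two_sub_const {Q : Measure ℝ} [IsFiniteMeasure Q]
    (hQ2 : Integrable (fun y : ℝ => y ^ 2) Q) (t : ℝ) : MemLp (fun y => y - t) 2 Q :=
  ((memLp_two_iff_integrable_sq measurable_id.aestronglyMeasurable).2 hQ2).sub (memLp_const t)

theorem integrable_alsLoss_s17 {Q : Measure ℝ} [IsFiniteMeasure Q]
    (hQ2 : Integrable (fun y : ℝ => y ^ 2) Q) (τ t : ℝ) :
    Integrable (fun y => alsLoss τ y t) Q :=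
  ((memLp_two_sub_const hQ2 t).integrable_sq.const_mul _).mono'
    (measurable_alsLoss τ t).aestronglyMeasurable (ae_of_all _ fun y => abs_alsLoss_le τ y t)

theorem integral_alsLossDeriv {Q : Measure ℝ} {τ t : ℝ}
    (h : Integrable (fun y => alsLossDeriv τ y t) Q) :
    ∫ y, alsLossDeriv τ y t ∂Q =
      -2 * τ * (∫ y in Ici t, (y - t) ∂Q) + 2 * (1 - τ) * ∫ y in Iio t, (t - y) ∂Q := by
  rw [← intervalIntegral.integral_Iio_add_Ici h.integrableOn h.integrableOn, add_comm,
    ← integral_const_mul, ← integral_const_mul]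
  congr 1
  · exact setIntegral_congr_fun measurableSet_Ici fun y hy => if_neg (not_lt.2 hy)
  · exact setIntegral_congr_fun measurableSet_Iio fun y hy => if_pos hy

theorem inner_risk_hasDerivAt_general (Q : Measure ℝ) [IsProbabilityMeasure Q]
    (hQ2 : Integrable (fun y : ℝ => y ^ 2) Q)
    (τ : ℝ) :
    ∀ t : ℝ, HasDerivAt (fun s : ℝ => ∫ y, alsLoss τ y s ∂Q)
      (-2 * τ * (∫ y in Set.Ici t, (y - t) ∂Q)
        + 2 * (1 - τ) * ∫ y in Set.Iio t, (t - y) ∂Q) t := by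
  intro t
  set C := 2 * (|τ| + |1 - τ|)
  have h_bound (y : ℝ) : ∀ s ∈ Metric.ball t 1, ‖alsLossDeriv τ y s‖ ≤ C * (|y - t| + 1) := by
    intro s hs
    have : |y - s| ≤ |y - t| + 1 := by
      have := abs_sub_le y t s
      rw [Metric.mem_ball, Real.dist_eq, abs_sub_comm] at hs
      linarith
    calc ‖alsLossDeriv τ y s‖ ≤ C * |y - s| := abs_alsLossDeriv_le τ y s
      _ ≤ C * (|y - t| + 1) := by gcongr
  have h_bound_int : Integrable (fun y => C * (|y - t| + 1)) Q :=
    (((memLp_two_sub_const hQ2 t).integrable one_le_two).abs.add (integrable_const 1)).const_mul C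
  obtain ⟨h_int, h_deriv⟩ := hasDerivAt_integral_of_dominated_loc_of_deriv_le
    (F := fun s y => alsLoss τ y s) (Metric.ball_mem_nhds t one_pos)
    (.of_forall fun s => (measurable_alsLoss τ s).aestronglyMeasurable)
    (integrable_alsLoss_s17 hQ2 τ t)
    (measurable_alsLossDeriv τ t).aestronglyMeasurable (ae_of_all _ h_bound) h_bound_int
    (ae_of_all _ fun y s _ => alsLoss_hasDerivAt τ y s)
  exact integral_alsLossDeriv h_int ▸ h_deriv

theorem inner_risk_hasDerivAt (Q : Measure ℝ) [IsProbabilityMeasure Q]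
    (hQ2 : Integrable (fun y : ℝ => y ^ 2) Q)
    (τ : ℝ) (hτ : τ ∈ Set.Ioo (0 : ℝ) 1) :
    ∀ t : ℝ, HasDerivAt (fun s : ℝ => ∫ y, alsLoss τ y s ∂Q)
      (-2 * τ * (∫ y in Set.Ici t, (y - t) ∂Q)
        + 2 * (1 - τ) * ∫ y in Set.Iio t, (t - y) ∂Q) t :=
  inner_risk_hasDerivAt_general Q hQ2 τ
end
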